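/- Let A be a commutative ring that is also a ℚ-algebra, and let D₁, D₂ : A → A be two derivations with D₁ ∘ D₂ = D₂ ∘ D₁. For f, g ∈ A and m ∈ ℕ define the m-th Moyal term B_m(f,g) := Σ_{k₁+k₂=m} ((−1)^{k₂}/(2^m · k₁! · k₂!)) · (D₁^{k₁} D₂^{k₂} f) · (D₁^{k₂} D₂^{k₁} g) ∈ A, and define the Moyal star product ⋆ on the formal power series ring A[[t]] by declaring that for f = Σ_p f_p t^p and g = Σ_q g_q t^q, the n-th coefficient of f ⋆ g is Σ_{p+q+m=n} B_m(f_p, g_q). Then the Moyal star product is associative: for all f, g, h ∈ A[[t]], (f ⋆ g) ⋆ h = f ⋆ (g ⋆ h). -/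

import Mathlib

open Finset

/-- The `m`-th term of the Moyal star product built from two derivations `D₁, D₂`:
`B_m(f,g) = ∑_{k₁+k₂=m} ((-1)^{k₂}/(2^m k₁! k₂!)) (D₁^{k₁} D₂^{k₂} f) (D₁^{k₂} D₂^{k₁} g)`. -/
noncomputable def moyalTerm {A : Type*} [CommRing A] [Algebra ℚ A]
    (D₁ D₂ : Derivation ℚ A A) (m : ℕ) (f g : A) : A :=
  ∑ k ∈ Finset.HasAntidiagonal.antidiagonal m,
    (((-1 : ℚ) ^ k.2 / (2 ^ m * k.1.factorial * k.2.factorial)) •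
      ((⇑D₁)^[k.1] ((⇑D₂)^[k.2] f) * (⇑D₁)^[k.2] ((⇑D₂)^[k.1] g)))

/-- The Moyal star product on `A⟦t⟧`: the `n`-th coefficient of `f ⋆ g` is
`∑_{p+q+m=n} B_m(f_p, g_q)`. -/
noncomputable def moyalStar {A : Type*} [CommRing A] [Algebra ℚ A]
    (D₁ D₂ : Derivation ℚ A A) (f g : PowerSeries A) : PowerSeries A :=
  PowerSeries.mk fun n =>
    ∑ am ∈ Finset.HasAntidiagonal.antidiagonal n, ∑ pq ∈ Finset.HasAntidiagonal.antidiagonal am.1,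
      moyalTerm D₁ D₂ am.2 (PowerSeries.coeff (R := A) pq.1 f) (PowerSeries.coeff (R := A) pq.2 g)

/-!
Write `P = ½ (D₁ ⊗ D₂ - D₂ ⊗ D₁)` on `A ⊗ A` and `μ` for multiplication. Then `B_m = μ ∘ Pᵐ / m!`
is the `m`-th coefficient of `μ ∘ exp (t P)`. On `A ⊗ A ⊗ A` let `Pᵢⱼ` be `P` acting on the factors `i`
and `j`. The Leibniz rule gives `P ∘ (μ ⊗ 1) = (μ ⊗ 1) ∘ (P₁₃ + P₂₃)` and
`P ∘ (1 ⊗ μ) = (1 ⊗ μ) ∘ (P₁₂ + P₁₃)`, and since `D₁` and `D₂` commute the `Pᵢⱼ` commute pairwise.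
The binomial theorem then turns both `∑_{m+n=N} B_n(B_m(a,b),c)` and `∑_{m+n=N} B_n(a,B_m(b,c))`
into `μ₃ ∘ (P₁₂ + P₁₃ + P₂₃)ᴺ / N!` applied to `a ⊗ b ⊗ c`. This order-wise associativity of the
family `B` is all that associativity of the induced product on `A⟦t⟧` needs.
-/

open TensorProduct
open scoped Nat

section ExpCoeff

variable {R : Type*} [Ring R] [Algebra ℚ R]

noncomputable def expCoeff (m : ℕ) (x : R) : R := (m ! : ℚ)⁻¹ • x ^ m

theorem Commute.expCoeff_add {x y : R} (h : Commute x y) (n : ℕ) :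
    expCoeff n (x + y) = ∑ kl ∈ antidiagonal n, expCoeff kl.1 x * expCoeff kl.2 y := by
  rw [expCoeff, h.add_pow', smul_sum]
  refine sum_congr rfl fun kl hkl => ?_
  obtain rfl := mem_antidiagonal.mp hkl
  rw [expCoeff, expCoeff, smul_mul_smul_comm, ← Nat.cast_smul_eq_nsmul ℚ, smul_smul,
    Nat.cast_add_choose]
  field_simp

theorem expCoeff_smul (c : ℚ) (x : R) (m : ℕ) : expCoeff m (c • x) = c ^ m • expCoeff m x := by
  rw [expCoeff, expCoeff, smul_pow, smul_comm]

end ExpCoeff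

namespace LinearMap

variable {M N : Type*} [AddCommGroup M] [Module ℚ M] [AddCommGroup N] [Module ℚ N]

theorem expCoeff_comp_of_comp_eq {P : Module.End ℚ N} {T : Module.End ℚ M} {L : M →ₗ[ℚ] N}
    (h : P ∘ₗ L = L ∘ₗ T) (m : ℕ) : expCoeff m P ∘ₗ L = L ∘ₗ expCoeff m T := by
  rw [expCoeff, expCoeff, smul_comp, comp_smul, Module.End.commute_pow_left_of_commute h]

theorem expCoeff_lTensor (f : Module.End ℚ N) (m : ℕ) :
    expCoeff m (lTensor M f) = lTensor M (expCoeff m f) := by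
  rw [expCoeff, expCoeff, lTensor_pow, lTensor_smul]

theorem expCoeff_rTensor (f : Module.End ℚ M) (m : ℕ) :
    expCoeff m (rTensor N f) = rTensor N (expCoeff m f) := by
  rw [expCoeff, expCoeff, rTensor_pow, rTensor_smul]

theorem sum_expCoeff_apply_expCoeff {P : Module.End ℚ N} {S T : Module.End ℚ M} {L : M →ₗ[ℚ] N}
    (hL : P ∘ₗ L = L ∘ₗ T) (hST : Commute S T) (n : ℕ) (x : M) :
    ∑ kl ∈ antidiagonal n, expCoeff kl.2 P (L (expCoeff kl.1 S x)) = L (expCoeff n (S + T) x) := by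
  rw [add_comm, hST.symm.expCoeff_add, ← Nat.sum_antidiagonal_swap, sum_apply, map_sum]
  refine sum_congr rfl fun kl _ => ?_
  rw [← comp_apply (expCoeff _ P), expCoeff_comp_of_comp_eq hL]
  rfl

end LinearMap

namespace PowerSeries

variable {R A : Type*} [CommSemiring R] [Semiring A] [Module R A]

noncomputable def starProduct (B : ℕ → A →ₗ[R] A →ₗ[R] A) (f g : PowerSeries A) : PowerSeries A :=
  mk fun n => ∑ km ∈ antidiagonal n, ∑ pq ∈ antidiagonal km.1, B km.2 (coeff pq.1 f) (coeff pq.2 g)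

variable (B : ℕ → A →ₗ[R] A →ₗ[R] A)

theorem coeff_starProduct (f g : PowerSeries A) (n : ℕ) :
    coeff n (starProduct B f g) =
      ∑ km ∈ antidiagonal n, ∑ pq ∈ antidiagonal km.1, B km.2 (coeff pq.1 f) (coeff pq.2 g) :=
  coeff_mk _ _

-- `p, q, r` are the degrees taken from `f, g, h` and `m + n = s` the orders of the two factors `B`.
theorem coeff_starProduct_starProduct_left (f g h : PowerSeries A) (N : ℕ) :
    coeff N (starProduct B (starProduct B f g) h) =
      ∑ us ∈ antidiagonal N, ∑ vr ∈ antidiagonal us.1, ∑ pq ∈ antidiagonal vr.1,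
        ∑ mn ∈ antidiagonal us.2, B mn.2 (B mn.1 (coeff pq.1 f) (coeff pq.2 g)) (coeff vr.2 h) := by
  simp only [coeff_starProduct, map_sum, LinearMap.sum_apply, sum_sigma']
  refine sum_nbij'
    (fun ⟨⟨_, n⟩, ⟨_, r⟩, ⟨_, m⟩, ⟨p, q⟩⟩ => ⟨(p + q + r, m + n), (p + q, r), (p, q), (m, n)⟩)
    (fun ⟨_, ⟨_, r⟩, ⟨p, q⟩, ⟨m, n⟩⟩ => ⟨(p + q + m + r, n), (p + q + m, r), (p + q, m), (p, q)⟩)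
    ?_ ?_ ?_ ?_ ?_
  all_goals
    rintro ⟨⟨_, _⟩, ⟨_, _⟩, ⟨_, _⟩, ⟨_, _⟩⟩ h
    simp only [mem_sigma, HasAntidiagonal.mem_antidiagonal, Sigma.mk.injEq, Prod.mk.injEq,
      heq_eq_eq, and_true] at h ⊢
    try omega

theorem coeff_starProduct_starProduct_right (f g h : PowerSeries A) (N : ℕ) :
    coeff N (starProduct B f (starProduct B g h)) =
      ∑ us ∈ antidiagonal N, ∑ vr ∈ antidiagonal us.1, ∑ pq ∈ antidiagonal vr.1,
        ∑ mn ∈ antidiagonal us.2, B mn.2 (coeff pq.1 f) (B mn.1 (coeff pq.2 g) (coeff vr.2 h)) := by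
  simp only [coeff_starProduct, map_sum, sum_sigma']
  refine sum_nbij'
    (fun ⟨⟨_, n⟩, ⟨p, _⟩, ⟨_, m⟩, ⟨q, r⟩⟩ => ⟨(p + q + r, m + n), (p + q, r), (p, q), (m, n)⟩)
    (fun ⟨_, ⟨_, r⟩, ⟨p, q⟩, ⟨m, n⟩⟩ => ⟨(p + q + r + m, n), (p, q + r + m), (q + r, m), (q, r)⟩)
    ?_ ?_ ?_ ?_ ?_
  all_goals
    rintro ⟨⟨_, _⟩, ⟨_, _⟩, ⟨_, _⟩, ⟨_, _⟩⟩ h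
    simp only [mem_sigma, HasAntidiagonal.mem_antidiagonal, Sigma.mk.injEq, Prod.mk.injEq,
      heq_eq_eq, and_true, true_and] at h ⊢
    try omega

theorem starProduct_assoc
    (hB : ∀ N a b c, ∑ kl ∈ antidiagonal N, B kl.2 (B kl.1 a b) c =
      ∑ kl ∈ antidiagonal N, B kl.2 a (B kl.1 b c))
    (f g h : PowerSeries A) :
    starProduct B (starProduct B f g) h = starProduct B f (starProduct B g h) := by
  ext N
  rw [coeff_starProduct_starProduct_left, coeff_starProduct_starProduct_right]
  exact sum_congr rfl fun _ _ => sum_congr rfl fun _ _ => sum_congr rfl fun _ _ => hB _ _ _ _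

end PowerSeries

section Moyal

open LinearMap

variable {A : Type*} [CommRing A] [Algebra ℚ A] (D₁ D₂ : Derivation ℚ A A)

noncomputable def moyalOp : Module.End ℚ (A ⊗[ℚ] A) :=
  (2⁻¹ : ℚ) • (map (D₁ : A →ₗ[ℚ] A) (D₂ : A →ₗ[ℚ] A) - map (D₂ : A →ₗ[ℚ] A) (D₁ : A →ₗ[ℚ] A))

noncomputable def moyalOp₁₂ : Module.End ℚ (A ⊗[ℚ] (A ⊗[ℚ] A)) :=
  (2⁻¹ : ℚ) • (map (D₁ : A →ₗ[ℚ] A) (rTensor A (D₂ : A →ₗ[ℚ] A)) -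
    map (D₂ : A →ₗ[ℚ] A) (rTensor A (D₁ : A →ₗ[ℚ] A)))

noncomputable def moyalOp₁₃ : Module.End ℚ (A ⊗[ℚ] (A ⊗[ℚ] A)) :=
  (2⁻¹ : ℚ) • (map (D₁ : A →ₗ[ℚ] A) (lTensor A (D₂ : A →ₗ[ℚ] A)) -
    map (D₂ : A →ₗ[ℚ] A) (lTensor A (D₁ : A →ₗ[ℚ] A)))

noncomputable def moyalOp₂₃ : Module.End ℚ (A ⊗[ℚ] (A ⊗[ℚ] A)) :=
  lTensor A (moyalOp D₁ D₂)

noncomputable def moyalBilin (m : ℕ) : A →ₗ[ℚ] A →ₗ[ℚ] A :=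
  (TensorProduct.mk ℚ A A).compr₂ (mul' ℚ A ∘ₗ expCoeff m (moyalOp D₁ D₂))

variable (A) in
noncomputable def mulFirstTwo : A ⊗[ℚ] (A ⊗[ℚ] A) →ₗ[ℚ] A ⊗[ℚ] A :=
  rTensor A (mul' ℚ A) ∘ₗ (TensorProduct.assoc ℚ A A A).symm.toLinearMap

variable (A) in
noncomputable def mulLastTwo : A ⊗[ℚ] (A ⊗[ℚ] A) →ₗ[ℚ] A ⊗[ℚ] A :=
  lTensor A (mul' ℚ A)

variable {D₁ D₂}

theorem moyalTerm_eq_mul'_expCoeff (hcomm : ∀ a : A, D₁ (D₂ a) = D₂ (D₁ a)) (m : ℕ) (a b : A) :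
    moyalTerm D₁ D₂ m a b = mul' ℚ A (expCoeff m (moyalOp D₁ D₂) (a ⊗ₜ b)) := by
  have hD : Function.Commute D₁ D₂ := hcomm
  have hswap : Commute (map (D₁ : A →ₗ[ℚ] A) (D₂ : A →ₗ[ℚ] A))
      (map (D₂ : A →ₗ[ℚ] A) (D₁ : A →ₗ[ℚ] A)) := by
    rw [commute_iff_eq, Module.End.mul_eq_comp, Module.End.mul_eq_comp, ← map_comp, ← map_comp]
    congr 1 <;> ext <;> simp [hcomm]
  rw [moyalOp, smul_sub, sub_eq_add_neg, ← neg_smul,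
    ((hswap.smul_left _).smul_right _).expCoeff_add, LinearMap.sum_apply, map_sum, moyalTerm]
  refine sum_congr rfl fun kl hkl => ?_
  obtain rfl := HasAntidiagonal.mem_antidiagonal.mp hkl
  rw [Module.End.mul_apply, expCoeff_smul, expCoeff_smul, expCoeff, expCoeff]
  simp only [LinearMap.smul_apply, map_smul, TensorProduct.map_pow, map_tmul, mul'_apply,
    Module.End.pow_apply, Derivation.coeFn_coe, smul_smul]
  rw [(hD.iterate_iterate kl.2 kl.1).eq b]
  congr 1
  rw [pow_add, neg_eq_neg_one_mul (2⁻¹ : ℚ), mul_pow, inv_pow, inv_pow]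
  field_simp

theorem mul'_comp_mulFirstTwo : mul' ℚ A ∘ₗ mulFirstTwo A = mul' ℚ A ∘ₗ mulLastTwo A := by
  refine ext_threefold' fun a b c => ?_
  simp [mulFirstTwo, mulLastTwo, mul_assoc]

theorem moyalOp_comp_mulFirstTwo :
    moyalOp D₁ D₂ ∘ₗ mulFirstTwo A = mulFirstTwo A ∘ₗ (moyalOp₁₃ D₁ D₂ + moyalOp₂₃ D₁ D₂) := by
  refine ext_threefold' fun a b c => ?_
  simp only [mulFirstTwo, moyalOp, moyalOp₁₃, moyalOp₂₃, LinearMap.comp_apply, LinearMap.add_apply,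
    LinearMap.sub_apply, LinearMap.smul_apply, lTensor_smul, lTensor_sub, map_tmul, lTensor_tmul,
    rTensor_tmul, map_add, map_sub, map_smul, Derivation.coeFn_coe, LinearEquiv.coe_coe,
    assoc_symm_tmul, mul'_apply, Derivation.leibniz, smul_eq_mul, add_tmul, mul_comm]
  module

theorem moyalOp_comp_mulLastTwo :
    moyalOp D₁ D₂ ∘ₗ mulLastTwo A = mulLastTwo A ∘ₗ (moyalOp₁₂ D₁ D₂ + moyalOp₁₃ D₁ D₂) := by
  refine ext_threefold' fun a b c => ?_
  simp only [mulLastTwo, moyalOp, moyalOp₁₂, moyalOp₁₃, LinearMap.comp_apply, LinearMap.add_apply,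
    LinearMap.sub_apply, LinearMap.smul_apply, map_tmul, lTensor_tmul, rTensor_tmul, map_add,
    map_sub, map_smul, Derivation.coeFn_coe, mul'_apply, Derivation.leibniz, smul_eq_mul, tmul_add,
    mul_comm]
  module

theorem rTensor_moyalOp_comp_assoc_symm :
    rTensor A (moyalOp D₁ D₂) ∘ₗ (TensorProduct.assoc ℚ A A A).symm.toLinearMap =
      (TensorProduct.assoc ℚ A A A).symm.toLinearMap ∘ₗ moyalOp₁₂ D₁ D₂ := by
  refine ext_threefold' fun a b c => ?_
  simp [moyalOp, moyalOp₁₂]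

theorem mulFirstTwo_expCoeff_moyalOp₁₂ (m : ℕ) (a b c : A) :
    mulFirstTwo A (expCoeff m (moyalOp₁₂ D₁ D₂) (a ⊗ₜ (b ⊗ₜ c))) =
      mul' ℚ A (expCoeff m (moyalOp D₁ D₂) (a ⊗ₜ b)) ⊗ₜ c := by
  have h := LinearMap.congr_fun
    (expCoeff_comp_of_comp_eq (rTensor_moyalOp_comp_assoc_symm (D₁ := D₁) (D₂ := D₂)) m)
    (a ⊗ₜ (b ⊗ₜ c))
  rw [expCoeff_rTensor, comp_apply, comp_apply] at h
  rw [mulFirstTwo, comp_apply, ← h]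
  simp

theorem mulLastTwo_expCoeff_moyalOp₂₃ (m : ℕ) (a b c : A) :
    mulLastTwo A (expCoeff m (moyalOp₂₃ D₁ D₂) (a ⊗ₜ (b ⊗ₜ c))) =
      a ⊗ₜ mul' ℚ A (expCoeff m (moyalOp D₁ D₂) (b ⊗ₜ c)) := by
  rw [moyalOp₂₃, expCoeff_lTensor, mulLastTwo, lTensor_tmul, lTensor_tmul]

theorem commute_moyalOp₁₂_moyalOp₁₃ (hcomm : ∀ a : A, D₁ (D₂ a) = D₂ (D₁ a)) :
    Commute (moyalOp₁₂ D₁ D₂) (moyalOp₁₃ D₁ D₂) := by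
  rw [commute_iff_eq]
  refine ext_threefold' fun a b c => ?_
  simp only [moyalOp₁₂, moyalOp₁₃, LinearMap.sub_apply, LinearMap.smul_apply, Module.End.mul_apply,
    map_tmul, lTensor_tmul, rTensor_tmul, map_sub, map_smul, Derivation.coeFn_coe, hcomm]
  module

theorem commute_moyalOp₁₂_moyalOp₂₃ (hcomm : ∀ a : A, D₁ (D₂ a) = D₂ (D₁ a)) :
    Commute (moyalOp₁₂ D₁ D₂) (moyalOp₂₃ D₁ D₂) := by
  rw [commute_iff_eq]
  refine ext_threefold' fun a b c => ?_
  simp only [moyalOp₁₂, moyalOp₂₃, moyalOp, LinearMap.sub_apply, LinearMap.smul_apply,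
    Module.End.mul_apply, lTensor_smul, lTensor_sub, map_tmul, lTensor_tmul, rTensor_tmul, map_sub,
    map_smul, Derivation.coeFn_coe, hcomm]
  module

theorem commute_moyalOp₁₃_moyalOp₂₃ (hcomm : ∀ a : A, D₁ (D₂ a) = D₂ (D₁ a)) :
    Commute (moyalOp₁₃ D₁ D₂) (moyalOp₂₃ D₁ D₂) := by
  rw [commute_iff_eq]
  refine ext_threefold' fun a b c => ?_
  simp only [moyalOp₁₃, moyalOp₂₃, moyalOp, LinearMap.sub_apply, LinearMap.smul_apply,
    Module.End.mul_apply, lTensor_smul, lTensor_sub, map_tmul, lTensor_tmul, map_sub, map_smul,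
    Derivation.coeFn_coe, hcomm]
  module

theorem sum_moyalBilin_moyalBilin_left (hcomm : ∀ a : A, D₁ (D₂ a) = D₂ (D₁ a))
    (N : ℕ) (a b c : A) :
    ∑ kl ∈ antidiagonal N, moyalBilin D₁ D₂ kl.2 (moyalBilin D₁ D₂ kl.1 a b) c =
      mul' ℚ A (mulFirstTwo A (expCoeff N
        (moyalOp₁₂ D₁ D₂ + (moyalOp₁₃ D₁ D₂ + moyalOp₂₃ D₁ D₂)) (a ⊗ₜ (b ⊗ₜ c)))) := by
  rw [← sum_expCoeff_apply_expCoeff moyalOp_comp_mulFirstTwo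
    ((commute_moyalOp₁₂_moyalOp₁₃ hcomm).add_right (commute_moyalOp₁₂_moyalOp₂₃ hcomm)), map_sum]
  refine sum_congr rfl fun kl _ => ?_
  simp only [moyalBilin, compr₂_apply, mk_apply, comp_apply, mulFirstTwo_expCoeff_moyalOp₁₂]

theorem sum_moyalBilin_moyalBilin_right (hcomm : ∀ a : A, D₁ (D₂ a) = D₂ (D₁ a))
    (N : ℕ) (a b c : A) :
    ∑ kl ∈ antidiagonal N, moyalBilin D₁ D₂ kl.2 a (moyalBilin D₁ D₂ kl.1 b c) =
      mul' ℚ A (mulLastTwo A (expCoeff N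
        (moyalOp₂₃ D₁ D₂ + (moyalOp₁₂ D₁ D₂ + moyalOp₁₃ D₁ D₂)) (a ⊗ₜ (b ⊗ₜ c)))) := by
  rw [← sum_expCoeff_apply_expCoeff moyalOp_comp_mulLastTwo
    ((commute_moyalOp₁₂_moyalOp₂₃ hcomm).symm.add_right (commute_moyalOp₁₃_moyalOp₂₃ hcomm).symm),
    map_sum]
  refine sum_congr rfl fun kl _ => ?_
  simp only [moyalBilin, compr₂_apply, mk_apply, comp_apply, mulLastTwo_expCoeff_moyalOp₂₃]

theorem moyalBilin_assoc (hcomm : ∀ a : A, D₁ (D₂ a) = D₂ (D₁ a)) (N : ℕ) (a b c : A) :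
    ∑ kl ∈ antidiagonal N, moyalBilin D₁ D₂ kl.2 (moyalBilin D₁ D₂ kl.1 a b) c =
      ∑ kl ∈ antidiagonal N, moyalBilin D₁ D₂ kl.2 a (moyalBilin D₁ D₂ kl.1 b c) := by
  rw [sum_moyalBilin_moyalBilin_left hcomm, sum_moyalBilin_moyalBilin_right hcomm,
    ← comp_apply (mul' ℚ A), mul'_comp_mulFirstTwo, comp_apply]
  congr 4
  abel

theorem moyalStar_eq_starProduct (hcomm : ∀ a : A, D₁ (D₂ a) = D₂ (D₁ a)) :
    moyalStar D₁ D₂ = PowerSeries.starProduct (moyalBilin D₁ D₂) := by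
  ext f g : 2
  ext n
  simp only [moyalStar, PowerSeries.coeff_mk, PowerSeries.coeff_starProduct, moyalBilin,
    compr₂_apply, mk_apply, comp_apply, moyalTerm_eq_mul'_expCoeff hcomm]

end Moyal

/-- The Moyal star product built from two commuting derivations is associative. -/
theorem moyalStar_assoc {A : Type*} [CommRing A] [Algebra ℚ A]
    (D₁ D₂ : Derivation ℚ A A) (hcomm : ∀ a : A, D₁ (D₂ a) = D₂ (D₁ a))
    (f g h : PowerSeries A) :
    moyalStar D₁ D₂ (moyalStar D₁ D₂ f g) h = moyalStar D₁ D₂ f (moyalStar D₁ D₂ g h) := by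
  rw [moyalStar_eq_starProduct hcomm]
  exact PowerSeries.starProduct_assoc _ (moyalBilin_assoc hcomm) f g h
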